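/- arXiv:2306.01349 — 2 statements merged into one kernel-verified Lean document; each statement's English description precedes it below -/
import Mathlib

section
/- Let M be a p×q binary matrix (with p, q ≥ 1) containing exactly n entries equal to 1, and assume M is maximal, i.e., for every i ∈ {1,…,p−1} there is a column j with M_{i,j} = M_{i+1,j} = 1, and for every j ∈ {1,…,q−1} there is a row i with M_{i,j} = M_{i,j+1} = 1. Then 2·√n − 2 ≤ d(M) ≤ 4n, where d(M) is the density of M. -/
/-- The density of a matrix with natural number entries: the number of unordered pairs
of distinct cells, both holding a 1, that are within distance 1 in each coordinate. -/
def density {p q : ℕ} (M : Matrix (Fin p) (Fin q) ℕ) : ℕ :=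
  (Finset.univ.filter fun x : (Fin p × Fin q) × (Fin p × Fin q) =>
    x.1 ≠ x.2 ∧ M x.1.1 x.1.2 = 1 ∧ M x.2.1 x.2.2 = 1 ∧
    (x.1.1.val ≤ x.2.1.val + 1 ∧ x.2.1.val ≤ x.1.1.val + 1) ∧
    (x.1.2.val ≤ x.2.2.val + 1 ∧ x.2.2.val ≤ x.1.2.val + 1)).card / 2

/-- Number of entries equal to 1. -/
def numOnes {p q : ℕ} (M : Matrix (Fin p) (Fin q) ℕ) : ℕ :=
  (Finset.univ.filter fun x : Fin p × Fin q => M x.1 x.2 = 1).card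

/-- The line contraction matrix (0-based index `i`, contracting rows `i` and `i+1`). -/
def lineContraction (p : ℕ) (i : ℕ) : Matrix (Fin p) (Fin p) ℕ :=
  Matrix.of fun k l =>
    if (k.val < i ∧ l = k) ∨ (k.val = i ∧ (l.val = i ∨ l.val = i + 1)) ∨
       (i < k.val ∧ k.val + 1 < p ∧ l.val = k.val + 1) then 1 else 0

/-- The column contraction matrix (0-based index `j`, contracting columns `j` and `j+1`). -/
def colContraction (q : ℕ) (j : ℕ) : Matrix (Fin q) (Fin q) ℕ :=
  Matrix.of fun k l =>
    if (k.val ≤ j ∧ l = k) ∨ (j < k.val ∧ l.val + 1 = k.val) then 1 else 0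

/-- The contraction of the sorted list of lines `I` and columns `J` of `M`. -/
def contraction {p q : ℕ} (M : Matrix (Fin p) (Fin q) ℕ) (I J : List ℕ) :
    Matrix (Fin p) (Fin q) ℕ :=
  (I.map (lineContraction p)).prod * M * ((J.reverse).map (colContraction q)).prod

/-- Lemma 1 of the paper: a maximal binary matrix with n ones has density
between 2√n - 2 and 4n. -/
theorem maximal_density_bounds {p q n : ℕ} (hp : 1 ≤ p) (hq : 1 ≤ q)
    (M : Matrix (Fin p) (Fin q) ℕ) (hM : ∀ i j, M i j ≤ 1) (hn : numOnes M = n)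
    (hrows : ∀ i : ℕ, ∀ hi : i + 1 < p, ∃ j : Fin q,
      M ⟨i, by omega⟩ j = 1 ∧ M ⟨i + 1, hi⟩ j = 1)
    (hcols : ∀ j : ℕ, ∀ hj : j + 1 < q, ∃ i : Fin p,
      M i ⟨j, by omega⟩ = 1 ∧ M i ⟨j + 1, hj⟩ = 1) :
    2 * Real.sqrt n - 2 ≤ (density M : ℝ) ∧ density M ≤ 4 * n := by
  classical
  set S := (Finset.univ.filter fun x : (Fin p × Fin q) × (Fin p × Fin q) =>
    x.1 ≠ x.2 ∧ M x.1.1 x.1.2 = 1 ∧ M x.2.1 x.2.2 = 1 ∧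
    (x.1.1.val ≤ x.2.1.val + 1 ∧ x.2.1.val ≤ x.1.1.val + 1) ∧
    (x.1.2.val ≤ x.2.2.val + 1 ∧ x.2.2.val ≤ x.1.2.val + 1)) with hSdef
  have hdens : density M = S.card / 2 := rfl
  -- membership characterization
  have hmemS : ∀ x : (Fin p × Fin q) × (Fin p × Fin q), x ∈ S ↔
      (x.1 ≠ x.2 ∧ M x.1.1 x.1.2 = 1 ∧ M x.2.1 x.2.2 = 1 ∧
      (x.1.1.val ≤ x.2.1.val + 1 ∧ x.2.1.val ≤ x.1.1.val + 1) ∧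
      (x.1.2.val ≤ x.2.2.val + 1 ∧ x.2.2.val ≤ x.1.2.val + 1)) := by
    intro x
    simp [hSdef]
  -- ones set
  set Ones := (Finset.univ.filter fun x : Fin p × Fin q => M x.1 x.2 = 1) with hOnes
  have hOnescard : Ones.card = n := hn
  ----------------------------------------------------------------
  -- Upper bound: S.card ≤ 8 * n
  ----------------------------------------------------------------
  set T : Finset (ℕ × ℕ) :=
    (({0,1,2} : Finset ℕ) ×ˢ ({0,1,2} : Finset ℕ)) \ {(1,1)} with hT
  have hTcard : T.card = 8 := by decide
  have hupper : S.card ≤ 8 * n := by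
    have hinj : S.card ≤ (Ones ×ˢ T).card := by
      refine Finset.card_le_card_of_injOn
        (fun x => (x.1, (x.2.1.val + 1 - x.1.1.val, x.2.2.val + 1 - x.1.2.val))) ?_ ?_
      · intro x hx
        obtain ⟨hne, h1, h2, ⟨ha1, ha2⟩, ⟨hb1, hb2⟩⟩ := (hmemS x).1 hx
        refine Finset.mem_product.mpr ⟨?_, ?_⟩
        · simp only [hOnes, Finset.mem_filter, Finset.mem_univ, true_and]
          exact h1
        · rw [hT, Finset.mem_sdiff]
          constructor
          · refine Finset.mem_product.mpr ⟨?_, ?_⟩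
            · simp only [Finset.mem_insert, Finset.mem_singleton]; omega
            · simp only [Finset.mem_insert, Finset.mem_singleton]; omega
          · intro hcontra
            rw [Finset.mem_singleton] at hcontra
            have he1 : x.2.1.val + 1 - x.1.1.val = 1 := congrArg Prod.fst hcontra
            have he2 : x.2.2.val + 1 - x.1.2.val = 1 := congrArg Prod.snd hcontra
            apply hne
            have hr : x.1.1 = x.2.1 := Fin.ext (by omega)
            have hc : x.1.2 = x.2.2 := Fin.ext (by omega)
            exact Prod.ext hr hc
      · intro x hx y hy hxy
        obtain ⟨_, _, _, ⟨hxa1, hxa2⟩, ⟨hxb1, hxb2⟩⟩ := (hmemS x).1 hx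
        obtain ⟨_, _, _, ⟨hya1, hya2⟩, ⟨hyb1, hyb2⟩⟩ := (hmemS y).1 hy
        simp only [Prod.mk.injEq] at hxy
        obtain ⟨h1, h2, h3⟩ := hxy
        have e1 : x.1.1.val = y.1.1.val := by rw [h1]
        have e2 : x.1.2.val = y.1.2.val := by rw [h1]
        have hr : x.2.1 = y.2.1 := Fin.ext (by omega)
        have hc : x.2.2 = y.2.2 := Fin.ext (by omega)
        exact Prod.ext h1 (Prod.ext hr hc)
    calc S.card ≤ (Ones ×ˢ T).card := hinj
      _ = n * 8 := by rw [Finset.card_product, hOnescard, hTcard]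
      _ = 8 * n := by ring
  ----------------------------------------------------------------
  -- Lower bound
  ----------------------------------------------------------------
  choose fr hfr1 hfr2 using hrows
  choose fc hfc1 hfc2 using hcols
  have junk : (Fin p × Fin q) × (Fin p × Fin q) :=
    ((⟨0, hp⟩, ⟨0, hq⟩), (⟨0, hp⟩, ⟨0, hq⟩))
  set src := ((Finset.range (p-1)).disjSum (Finset.range (q-1))) ×ˢ
    (Finset.univ : Finset Bool) with hsrc
  have hsrcL : ∀ (i : ℕ) (b : Bool), ((Sum.inl i : ℕ ⊕ ℕ), b) ∈ src → i + 1 < p := by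
    intro i b h
    rw [hsrc, Finset.mem_product] at h
    have := (Finset.inl_mem_disjSum).1 h.1
    rw [Finset.mem_range] at this
    omega
  have hsrcR : ∀ (j : ℕ) (b : Bool), ((Sum.inr j : ℕ ⊕ ℕ), b) ∈ src → j + 1 < q := by
    intro j b h
    rw [hsrc, Finset.mem_product] at h
    have := (Finset.inr_mem_disjSum).1 h.1
    rw [Finset.mem_range] at this
    omega
  have hlower : (p - 1 + (q - 1)) * 2 ≤ S.card := by
    have key := Finset.card_le_card_of_injOn
      (f := fun z : (ℕ ⊕ ℕ) × Bool =>
        match z with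
        | (Sum.inl i, b) =>
          if h : i + 1 < p then
            if b then (((⟨i, by omega⟩ : Fin p), fr i h), ((⟨i+1, h⟩ : Fin p), fr i h))
            else (((⟨i+1, h⟩ : Fin p), fr i h), ((⟨i, by omega⟩ : Fin p), fr i h))
          else junk
        | (Sum.inr j, b) =>
          if h : j + 1 < q then
            if b then ((fc j h, (⟨j, by omega⟩ : Fin q)), (fc j h, (⟨j+1, h⟩ : Fin q)))
            else ((fc j h, (⟨j+1, h⟩ : Fin q)), (fc j h, (⟨j, by omega⟩ : Fin q)))
          else junk)
      (s := src) (t := S) ?_ ?_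
    · calc (p - 1 + (q - 1)) * 2 = src.card := by
            rw [hsrc, Finset.card_product, Finset.card_disjSum, Finset.card_range,
              Finset.card_range]
            simp
        _ ≤ S.card := key
    · rintro ⟨(i | j), b⟩ hz
      · have h : i + 1 < p := hsrcL i b hz
        rw [Finset.mem_coe, hmemS]
        cases b
        · simp only [dif_pos h, if_false, Bool.false_eq_true]
          refine ⟨?_, hfr2 i h, hfr1 i h, ⟨?_, ?_⟩, ⟨Nat.le_succ _, Nat.le_succ _⟩⟩
          · intro hcon
            have := congrArg (fun t => t.1.val) hcon
            simp at this
          · show i + 1 ≤ i + 1; omega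
          · show i ≤ i + 1 + 1; omega
        · simp only [dif_pos h, if_true]
          refine ⟨?_, hfr1 i h, hfr2 i h, ⟨?_, ?_⟩, ⟨Nat.le_succ _, Nat.le_succ _⟩⟩
          · intro hcon
            have := congrArg (fun t => t.1.val) hcon
            simp at this
          · show i ≤ i + 1 + 1; omega
          · show i + 1 ≤ i + 1; omega
      · have h : j + 1 < q := hsrcR j b hz
        rw [Finset.mem_coe, hmemS]
        cases b
        · simp only [dif_pos h, if_false, Bool.false_eq_true]
          refine ⟨?_, hfc2 j h, hfc1 j h, ⟨Nat.le_succ _, Nat.le_succ _⟩, ⟨?_, ?_⟩⟩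
          · intro hcon
            have := congrArg (fun t => t.2.val) hcon
            simp at this
          · show j + 1 ≤ j + 1; omega
          · show j ≤ j + 1 + 1; omega
        · simp only [dif_pos h, if_true]
          refine ⟨?_, hfc1 j h, hfc2 j h, ⟨Nat.le_succ _, Nat.le_succ _⟩, ⟨?_, ?_⟩⟩
          · intro hcon
            have := congrArg (fun t => t.2.val) hcon
            simp at this
          · show j ≤ j + 1 + 1; omega
          · show j + 1 ≤ j + 1; omega
    · rintro ⟨(i | j), b⟩ hz ⟨(i' | j'), b'⟩ hw heq
      · have h : i + 1 < p := hsrcL i b hz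
        have h' : i' + 1 < p := hsrcL i' b' hw
        simp only [dif_pos h, dif_pos h'] at heq
        cases b <;> cases b' <;>
          simp only [if_true, if_false, Bool.false_eq_true, Prod.mk.injEq,
            Fin.mk.injEq] at heq
        · obtain ⟨⟨h1, _⟩, _⟩ := heq
          have hii : i = i' := by omega
          simp [hii]
        · omega
        · omega
        · obtain ⟨⟨h1, _⟩, _⟩ := heq
          have hii : i = i' := by omega
          simp [hii]
      · exfalso
        have h : i + 1 < p := hsrcL i b hz
        have h' : j' + 1 < q := hsrcR j' b' hw
        simp only [dif_pos h, dif_pos h'] at heq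
        cases b <;> cases b' <;>
          simp only [if_true, if_false, Bool.false_eq_true, Prod.mk.injEq] at heq <;>
          [skip; skip; skip; skip] <;>
          · obtain ⟨⟨e1, _⟩, ⟨e2, _⟩⟩ := heq
            have v1 := congrArg Fin.val e1
            have v2 := congrArg Fin.val e2
            simp only [] at v1 v2
            omega
      · exfalso
        have h : j + 1 < q := hsrcR j b hz
        have h' : i' + 1 < p := hsrcL i' b' hw
        simp only [dif_pos h, dif_pos h'] at heq
        cases b <;> cases b' <;>
          simp only [if_true, if_false, Bool.false_eq_true, Prod.mk.injEq] at heq <;>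
          [skip; skip; skip; skip] <;>
          · obtain ⟨⟨e1, _⟩, ⟨e2, _⟩⟩ := heq
            have v1 := congrArg Fin.val e1
            have v2 := congrArg Fin.val e2
            simp only [] at v1 v2
            omega
      · have h : j + 1 < q := hsrcR j b hz
        have h' : j' + 1 < q := hsrcR j' b' hw
        simp only [dif_pos h, dif_pos h'] at heq
        cases b <;> cases b' <;>
          simp only [if_true, if_false, Bool.false_eq_true, Prod.mk.injEq,
            Fin.mk.injEq] at heq
        · obtain ⟨⟨_, h1⟩, _⟩ := heq
          have hjj : j = j' := by omega
          simp [hjj]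
        · omega
        · omega
        · obtain ⟨⟨_, h1⟩, _⟩ := heq
          have hjj : j = j' := by omega
          simp [hjj]
  ----------------------------------------------------------------
  -- conclude
  ----------------------------------------------------------------
  have hdl : p + q - 2 ≤ density M := by
    rw [hdens]
    rw [Nat.le_div_iff_mul_le (by norm_num)]
    calc (p + q - 2) * 2 = (p - 1 + (q - 1)) * 2 := by omega
      _ ≤ S.card := hlower
  have hdu : density M ≤ 4 * n := by
    rw [hdens]
    calc S.card / 2 ≤ 8 * n / 2 := Nat.div_le_div_right hupper
      _ = 4 * n := by omega
  refine ⟨?_, hdu⟩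
  -- n ≤ p * q
  have hnpq : n ≤ p * q := by
    rw [← hn]
    unfold numOnes
    calc (Finset.univ.filter fun x : Fin p × Fin q => M x.1 x.2 = 1).card
        ≤ (Finset.univ : Finset (Fin p × Fin q)).card := Finset.card_filter_le _ _
      _ = p * q := by simp
  have hsqrt : Real.sqrt n ≤ ((p : ℝ) + q) / 2 := by
    rw [show ((p : ℝ) + q) / 2 = Real.sqrt ((((p : ℝ) + q) / 2) ^ 2) from
      (Real.sqrt_sq (by positivity)).symm]
    apply Real.sqrt_le_sqrt
    have : (n : ℝ) ≤ (p : ℝ) * q := by exact_mod_cast hnpq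
    nlinarith [sq_nonneg ((p : ℝ) - q)]
  have hcast : ((p : ℝ) + q - 2) ≤ (density M : ℝ) := by
    have : ((p + q - 2 : ℕ) : ℝ) ≤ (density M : ℝ) := by exact_mod_cast hdl
    have hge : (2 : ℝ) ≤ (p : ℝ) + q := by
      have : 1 ≤ p := hp
      have : 1 ≤ q := hq
      push_cast
      have hp' : (1 : ℝ) ≤ p := by exact_mod_cast hp
      have hq' : (1 : ℝ) ≤ q := by exact_mod_cast hq
      linarith
    have hcast2 : ((p + q - 2 : ℕ) : ℝ) = (p : ℝ) + q - 2 := by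
      have : 2 ≤ p + q := by omega
      push_cast [this]
      ring
    linarith [hcast2 ▸ this]
  linarith
end

section
/- Let M be a p×q binary matrix whose n ≥ 1 entries equal to 1 occupy pairwise distinct rows and pairwise distinct columns (i.e., no two 1-entries share a row and no two share a column). Then there exist sorted sublists I of {1,…,p−1} and J of {1,…,q−1} such that the contraction C(M,I,J) is valid and d(C(M,I,J)) = n − 1. Combined with the upper bound d ≤ 4n for any binary matrix with n ones, this shows that on such instances any optimal solution exceeds this one by a factor at most 4n/(n−1). -/

lemma rowProd_apply {p : ℕ} (m : ℕ) (hm : m < p) (k l : Fin p) :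
    ((List.range m).map (lineContraction p)).prod k l =
      if (k.val = 0 ∧ l.val ≤ m) ∨ (0 < k.val ∧ l.val = k.val + m) then 1 else 0 := by
  induction m generalizing l with
  | zero =>
    simp only [List.range_zero, List.map_nil, List.prod_nil]
    rw [Matrix.one_apply]
    have h : (k = l) ↔ ((k.val = 0 ∧ l.val ≤ 0) ∨ (0 < k.val ∧ l.val = k.val + 0)) := by
      rw [Fin.ext_iff]; omega
    split_ifs with h1 h2 h2 <;> first | rfl | (exfalso; omega) | (exfalso; exact h2 (h.mp h1)) | (exfalso; exact h1 (h.mpr h2))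
  | succ m ih =>
    have hm' : m < p := by omega
    rw [List.range_succ, List.map_append, List.prod_append, List.map_singleton,
      List.prod_singleton, Matrix.mul_apply]
    have key : ∀ t : Fin p,
        ((List.range m).map (lineContraction p)).prod k t * lineContraction p m t l =
        if (((k.val = 0 ∧ l.val ≤ m + 1) ∨ (0 < k.val ∧ l.val = k.val + (m + 1))) ∧
            t.val = (if k.val = 0 then min l.val m else k.val + m)) then 1 else 0 := by
      intro t
      rw [ih hm' t, lineContraction]
      simp only [Matrix.of_apply, ite_mul, one_mul, zero_mul, Fin.ext_iff]
      have hk := k.isLt; have hl := l.isLt; have ht := t.isLt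
      by_cases hk0 : k.val = 0
      · simp only [hk0, if_pos rfl, Nat.min_def, lt_self_iff_false, false_and, or_false,
          true_and, eq_self_iff_true]
        split_ifs <;> omega
      · simp only [if_neg hk0, Nat.min_def]
        split_ifs <;> omega
    rw [Finset.sum_congr rfl (fun t _ => key t)]
    by_cases ht : ((k.val = 0 ∧ l.val ≤ m + 1) ∨ (0 < k.val ∧ l.val = k.val + (m + 1)))
    · have hτ : (if k.val = 0 then min l.val m else k.val + m) < p := by
        have hl := l.isLt
        rcases ht with ⟨h0, h1⟩ | ⟨h0, h1⟩
        · rw [if_pos h0, Nat.min_def]; split_ifs <;> omega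
        · rw [if_neg (by omega)]; omega
      rw [if_pos ht]
      have h2 : ∀ t : Fin p, (if (((k.val = 0 ∧ l.val ≤ m + 1) ∨ (0 < k.val ∧ l.val = k.val + (m + 1))) ∧
            t.val = (if k.val = 0 then min l.val m else k.val + m)) then (1:ℕ) else 0) =
          if t = ⟨_, hτ⟩ then 1 else 0 := by
        intro t
        simp only [ht, true_and, Fin.ext_iff]
      rw [Finset.sum_congr rfl (fun t _ => h2 t), Finset.sum_ite_eq' Finset.univ]
      simp
    · rw [if_neg ht]
      rw [Finset.sum_congr rfl (fun t _ => by rw [if_neg (fun h => ht h.1)])]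
      simp

lemma countP_le_of_sorted (L : List ℕ) (a k : ℕ) (hs : L.Pairwise (· < ·))
    (ha : ∀ x ∈ L, a ≤ x) : L.countP (fun x => decide (x < k)) ≤ k - a := by
  induction L generalizing a with
  | nil => simp
  | cons x L ih =>
    have hx : a ≤ x := ha x (List.mem_cons_self)
    have hL : ∀ y ∈ L, x + 1 ≤ y := fun y hy => (List.pairwise_cons.mp hs).1 y hy
    have := ih (x + 1) (List.pairwise_cons.mp hs).2 hL
    rw [List.countP_cons]
    by_cases h : x < k <;> simp [h] <;> omega

lemma colProd_apply {q : ℕ} (J : List ℕ) (hs : J.Pairwise (· < ·)) (hb : ∀ j ∈ J, j + 1 < q)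
    (k l : Fin q) :
    ((J.reverse).map (colContraction q)).prod k l =
      if l.val + J.countP (fun j => decide (j < k.val)) = k.val then 1 else 0 := by
  induction J generalizing l with
  | nil =>
    simp only [List.reverse_nil, List.map_nil, List.prod_nil, List.countP_nil, Nat.add_zero]
    rw [Matrix.one_apply]
    have : (k = l) ↔ (l.val = k.val) := by rw [Fin.ext_iff]; omega
    split_ifs with h1 h2 h2 <;> first | rfl | (exfalso; omega) | (exfalso; exact h2 (this.mp h1)) | (exfalso; exact h1 (this.mpr h2)) | (simp_all [Fin.ext_iff]; done)
  | cons j J ih =>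
    have hs' : J.Pairwise (· < ·) := (List.pairwise_cons.mp hs).2
    have hj : ∀ x ∈ J, j + 1 ≤ x := fun y hy => (List.pairwise_cons.mp hs).1 y hy
    have hb' : ∀ x ∈ J, x + 1 < q := fun y hy => hb y (List.mem_cons_of_mem j hy)
    have hcnt : J.countP (fun x => decide (x < k.val)) ≤ k.val - (j+1) :=
      countP_le_of_sorted J (j+1) k.val hs' hj
    have hcnt0 : k.val ≤ j → J.countP (fun x => decide (x < k.val)) = 0 := by
      intro hkj
      rw [List.countP_eq_zero]
      intro x hx
      intro hc
      simp only [decide_eq_true_eq] at hc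
      have := hj x hx
      omega
    have hq : 0 < q := k.pos
    rw [List.reverse_cons, List.map_append, List.prod_append, List.map_singleton,
      List.prod_singleton, Matrix.mul_apply]
    set c' := J.countP (fun x => decide (x < k.val)) with hc'
    have hcle : c' ≤ k.val := by
      by_cases hkj : k.val ≤ j
      · rw [hcnt0 hkj]; omega
      · omega
    have hcount : (j :: J).countP (fun x => decide (x < k.val)) =
        c' + (if j < k.val then 1 else 0) := by
      rw [List.countP_cons, hc']
      by_cases h : j < k.val <;> simp [h]
    have key : ∀ t : Fin q,
        ((J.reverse).map (colContraction q)).prod k t * colContraction q j t l =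
        if ((l.val + (c' + (if j < k.val then 1 else 0)) = k.val) ∧ t.val + c' = k.val)
          then 1 else 0 := by
      intro t
      rw [ih hs' hb' t, colContraction]
      simp only [Matrix.of_apply, ite_mul, one_mul, zero_mul, Fin.ext_iff]
      by_cases hkj : k.val ≤ j
      · have h0 : c' = 0 := hcnt0 hkj
        split_ifs <;> omega
      · split_ifs <;> omega
    rw [Finset.sum_congr rfl (fun t _ => key t), hcount]
    by_cases htar : l.val + (c' + (if j < k.val then 1 else 0)) = k.val
    · have hτ : k.val - c' < q := by omega
      rw [if_pos htar]
      have h2 : ∀ t : Fin q,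
          (if ((l.val + (c' + (if j < k.val then 1 else 0)) = k.val) ∧ t.val + c' = k.val)
            then (1:ℕ) else 0) = if t = ⟨k.val - c', hτ⟩ then 1 else 0 := by
        intro t
        simp only [htar, true_and, Fin.ext_iff]
        split_ifs <;> first | rfl | omega
      rw [Finset.sum_congr rfl (fun t _ => h2 t), Finset.sum_ite_eq' Finset.univ]
      simp
    · rw [if_neg htar]
      rw [Finset.sum_congr rfl (fun t _ => by rw [if_neg (fun h => htar h.1)])]
      simp

lemma countP_range (m : ℕ) (f : ℕ → Bool) :
    (List.range m).countP f = ((Finset.range m).filter (fun j => f j = true)).card := by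
  induction m with
  | zero => simp
  | succ m ih =>
    rw [List.range_succ, List.countP_append, ih, Finset.range_add_one, Finset.filter_insert]
    by_cases h : f m = true
    · rw [if_pos h, Finset.card_insert_of_notMem (by simp)]
      simp [List.countP_cons, h]
    · rw [if_neg h]
      simp [List.countP_cons, h]

lemma ite_one_zero_eq_one (P : Prop) [Decidable P] : ((if P then (1:ℕ) else 0) = 1) ↔ P := by
  split_ifs with h <;> simp [h]


/-- If the n ≥ 1 ones of a binary matrix occupy pairwise distinct rows and pairwise
distinct columns, then some valid contraction achieves density n - 1. -/
theorem distinct_rows_cols_contraction {p q n : ℕ} (M : Matrix (Fin p) (Fin q) ℕ)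
    (hM : ∀ i j, M i j ≤ 1) (hn : numOnes M = n) (h1 : 1 ≤ n)
    (hdist : ∀ a b : Fin p × Fin q, M a.1 a.2 = 1 → M b.1 b.2 = 1 → a ≠ b →
      a.1 ≠ b.1 ∧ a.2 ≠ b.2) :
    ∃ I J : List ℕ, I.Pairwise (· < ·) ∧ (∀ i ∈ I, i + 1 < p) ∧
      J.Pairwise (· < ·) ∧ (∀ j ∈ J, j + 1 < q) ∧
      (∀ k l, contraction M I J k l ≤ 1) ∧
      density (contraction M I J) = n - 1 := by
  classical
  unfold numOnes at hn
  have hone : ∃ x : Fin p × Fin q, M x.1 x.2 = 1 := by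
    by_contra h
    push_neg at h
    have : (Finset.univ.filter fun x : Fin p × Fin q => M x.1 x.2 = 1).card = 0 := by
      rw [Finset.card_eq_zero, Finset.filter_eq_empty_iff]
      intro x _
      exact h x
    omega
  obtain ⟨x₀, hx₀⟩ := hone
  have hp : 0 < p := x₀.1.pos
  have hq : 0 < q := x₀.2.pos
  set S1 : Finset (Fin q) := Finset.univ.filter (fun c => ∃ r, M r c = 1) with hS1
  have himg : S1 = (Finset.univ.filter fun x : Fin p × Fin q => M x.1 x.2 = 1).image Prod.snd := by
    ext c
    simp only [hS1, Finset.mem_filter, Finset.mem_univ, true_and, Finset.mem_image,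
      Prod.exists]
    constructor
    · rintro ⟨r, hr⟩; exact ⟨r, c, hr, rfl⟩
    · rintro ⟨r, c', hr, rfl⟩; exact ⟨r, hr⟩
  have hinj : Set.InjOn Prod.snd
      ((Finset.univ.filter fun x : Fin p × Fin q => M x.1 x.2 = 1) :
        Set (Fin p × Fin q)) := by
    intro a ha b hb hab
    simp only [Finset.coe_filter, Set.mem_setOf_eq] at ha hb
    by_contra hne
    exact (hdist a b ha.2 hb.2 hne).2 hab
  have hScard : S1.card = n := by
    rw [himg, Finset.card_image_of_injOn hinj, hn]
  have hnq : n ≤ q := by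
    have := Finset.card_le_univ S1
    rw [hScard] at this
    simpa using this
  have hsum : ∀ c : Fin q, (∑ r, M r c) = if c ∈ S1 then 1 else 0 := by
    intro c
    by_cases hc : c ∈ S1
    · rw [if_pos hc]
      obtain ⟨r₀, hr₀⟩ : ∃ r, M r c = 1 := by
        simpa only [hS1, Finset.mem_filter, Finset.mem_univ, true_and] using hc
      rw [Finset.sum_eq_single r₀ ?_ (by simp)]
      · exact hr₀
      · intro r _ hr
        have hle := hM r c
        by_contra hcon
        have h1' : M r c = 1 := by omega
        exact (hdist (r, c) (r₀, c) h1' hr₀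
          (fun he => hr (congrArg Prod.fst he))).2 rfl
    · rw [if_neg hc]
      apply Finset.sum_eq_zero
      intro r _
      have h2 : ¬ (M r c = 1) := fun h =>
        hc (by simp only [hS1, Finset.mem_filter, Finset.mem_univ, true_and]; exact ⟨r, h⟩)
      have := hM r c
      omega
  set ρ : Fin q → ℕ := fun c => (S1.filter (fun c' => c' < c)).card with hρ
  have hmono : ∀ c c' : Fin q, c' ∈ S1 → c' < c → ρ c' < ρ c := by
    intro c c' hc' hlt
    apply Finset.card_lt_card
    rw [Finset.ssubset_def]
    constructor
    · intro x hx
      simp only [Finset.mem_filter] at hx ⊢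
      exact ⟨hx.1, hx.2.trans hlt⟩
    · intro hsub
      have h := hsub (Finset.mem_filter.mpr ⟨hc', hlt⟩)
      simp only [Finset.mem_filter] at h
      exact absurd h.2 (lt_irrefl c')
  have hρinj : Set.InjOn ρ ↑S1 := by
    intro c hc c' hc' h
    by_contra hne
    rcases lt_or_gt_of_ne hne with hlt | hlt
    · have := hmono c' c (by simpa using hc) hlt; omega
    · have := hmono c c' (by simpa using hc') hlt; omega
  have hρlt : ∀ c ∈ S1, ρ c < n := by
    intro c hc
    have hsub : S1.filter (fun c' => c' < c) ⊆ S1.erase c := by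
      intro x hx
      simp only [Finset.mem_filter] at hx
      exact Finset.mem_erase.mpr ⟨ne_of_lt hx.2, hx.1⟩
    have hcard := Finset.card_le_card hsub
    rw [Finset.card_erase_of_mem hc, hScard] at hcard
    have : 0 < S1.card := Finset.card_pos.mpr ⟨c, hc⟩
    rw [hScard] at this
    exact lt_of_le_of_lt hcard (by omega)
  have himage : S1.image ρ = Finset.range n := by
    apply Finset.eq_of_subset_of_card_le
    · intro l hl
      obtain ⟨c, hc, hcl⟩ := Finset.mem_image.mp hl
      rw [Finset.mem_range, ← hcl]
      exact hρlt c hc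
    · rw [Finset.card_range, Finset.card_image_of_injOn hρinj, hScard]
  have hfc : ∀ l : ℕ, (S1.filter (fun c => ρ c = l)).card = if l < n then 1 else 0 := by
    intro l
    by_cases hl : l < n
    · rw [if_pos hl, Finset.card_eq_one]
      have : l ∈ S1.image ρ := by rw [himage]; exact Finset.mem_range.mpr hl
      obtain ⟨c, hc, hcl⟩ := Finset.mem_image.mp this
      refine ⟨c, ?_⟩
      ext x
      simp only [Finset.mem_filter, Finset.mem_singleton]
      constructor
      · rintro ⟨hx, hxl⟩
        exact hρinj (by simpa using hx) (by simpa using hc) (by rw [hxl, hcl])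
      · rintro rfl
        exact ⟨hc, hcl⟩
    · rw [if_neg hl, Finset.card_eq_zero, Finset.filter_eq_empty_iff]
      intro c hc
      have := hρlt c hc
      omega
  set I : List ℕ := List.range (p - 1) with hI
  have hIs : I.Pairwise (· < ·) := List.pairwise_lt_range
  have hIb : ∀ i ∈ I, i + 1 < p := by
    intro i hi
    have := List.mem_range.mp hi
    omega
  set zc : ℕ → Prop := fun j => ∀ c : Fin q, c.val = j → c ∉ S1 with hzc
  set J : List ℕ := (List.range (q - 1)).filter (fun j => decide (zc j)) with hJ
  have hJs : J.Pairwise (· < ·) := (List.pairwise_lt_range).filter _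
  have hJb : ∀ j ∈ J, j + 1 < q := by
    intro j hj
    have := List.mem_range.mp (List.mem_of_mem_filter hj)
    omega
  have hcnt : ∀ c : Fin q, J.countP (fun j => decide (j < c.val)) + ρ c = c.val := by
    intro c
    have hcq : c.val ≤ q - 1 := by have := c.isLt; omega
    rw [hJ, List.countP_filter, countP_range]
    set s : Finset ℕ := (Finset.range (q - 1)).filter (fun j => j < c.val) with hs
    have e1 : ((Finset.range (q - 1)).filter
          (fun j => (decide (j < c.val) && decide (zc j)) = true)) = s.filter (fun j => zc j) := by
      ext j
      simp only [hs, Finset.mem_filter, Finset.mem_range, Bool.and_eq_true, decide_eq_true_eq]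
      tauto
    have e2 : ρ c = (s.filter (fun j => ¬ zc j)).card := by
      apply Finset.card_bij (fun c' _ => c'.val)
      · intro a ha
        simp only [Finset.mem_filter] at ha
        have hav := a.isLt
        have halt : a.val < c.val := ha.2
        simp only [hs, Finset.mem_filter, Finset.mem_range]
        refine ⟨⟨by omega, halt⟩, ?_⟩
        intro hz
        exact hz a rfl ha.1
      · intro a ha b hb hab
        exact Fin.ext hab
      · intro j hj
        simp only [hs, Finset.mem_filter, Finset.mem_range, hzc] at hj
        push_neg at hj
        obtain ⟨⟨hj1, hj2⟩, c', hc'j, hc'S⟩ := hj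
        refine ⟨c', Finset.mem_filter.mpr ⟨hc'S, ?_⟩, hc'j⟩
        rw [Fin.lt_def, hc'j]
        exact hj2
    have e3 : s.card = c.val := by
      have hse : s = Finset.range c.val := by
        ext j
        simp only [hs, Finset.mem_filter, Finset.mem_range]
        omega
      rw [hse, Finset.card_range]
    calc ((Finset.range (q - 1)).filter
          (fun j => (decide (j < c.val) && decide (zc j)) = true)).card + ρ c
        = (s.filter (fun j => zc j)).card + (s.filter (fun j => ¬ zc j)).card := by
          rw [e1, e2]
      _ = s.card := Finset.card_filter_add_card_filter_not _
      _ = c.val := e3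
  have hPM : ∀ (k : Fin p) (c : Fin q), ((I.map (lineContraction p)).prod * M) k c
      = if k.val = 0 ∧ c ∈ S1 then 1 else 0 := by
    intro k c
    rw [Matrix.mul_apply]
    by_cases hk : k.val = 0
    · have hall : ∀ r : Fin p, ((I.map (lineContraction p)).prod) k r = 1 := by
        intro r
        rw [hI, rowProd_apply (p - 1) (by omega)]
        exact if_pos (Or.inl ⟨hk, by have := r.isLt; omega⟩)
      calc (∑ r, ((I.map (lineContraction p)).prod) k r * M r c)
          = ∑ r, M r c := by
            apply Finset.sum_congr rfl
            intro r _
            rw [hall r, one_mul]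
        _ = if c ∈ S1 then 1 else 0 := hsum c
        _ = if k.val = 0 ∧ c ∈ S1 then 1 else 0 := by simp [hk]
    · have hall : ∀ r : Fin p, ((I.map (lineContraction p)).prod) k r = 0 := by
        intro r
        rw [hI, rowProd_apply (p - 1) (by omega)]
        apply if_neg
        rintro (⟨h0, -⟩ | ⟨-, h2⟩)
        · exact hk h0
        · have h3 := r.isLt; have h4 := k.isLt; omega
      rw [if_neg (fun h => hk h.1)]
      apply Finset.sum_eq_zero
      intro r _
      rw [hall r, zero_mul]
  have hF : ∀ (k : Fin p) (l : Fin q),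
      contraction M I J k l = if k.val = 0 ∧ l.val < n then 1 else 0 := by
    intro k l
    rw [contraction, Matrix.mul_apply]
    have key : ∀ c : Fin q, ((I.map (lineContraction p)).prod * M) k c *
        ((J.reverse).map (colContraction q)).prod c l =
        if k.val = 0 ∧ (c ∈ S1 ∧ ρ c = l.val) then 1 else 0 := by
      intro c
      rw [hPM k c, colProd_apply J hJs hJb c l]
      have hcc := hcnt c
      have hρc : ρ c ≤ c.val := by omega
      simp only [ite_mul, one_mul, zero_mul]
      by_cases hcS : c ∈ S1 <;> by_cases hk0 : k.val = 0 <;>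
        simp only [hcS, hk0, true_and, false_and, and_true, and_false, if_false,
          iff_true, iff_false, eq_self_iff_true, if_true, not_true, not_false_iff] <;>
        split_ifs <;> omega
    rw [Finset.sum_congr rfl (fun c _ => key c)]
    by_cases hk0 : k.val = 0
    · simp only [hk0, true_and]
      have hsum2 : (∑ c, if c ∈ S1 ∧ ρ c = l.val then (1:ℕ) else 0)
          = (S1.filter (fun c => ρ c = l.val)).card := by
        rw [Finset.card_filter]
        rw [Finset.sum_filter]
        apply Finset.sum_congr rfl
        intro c _
        have h3 : (∃ r, M r c = 1) ↔ c ∈ S1 := by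
          simp [hS1]
        by_cases h1' : c ∈ S1 <;> by_cases h2' : ρ c = l.val <;> simp [h1', h2', h3]
      rw [hsum2, hfc l.val]
    · rw [if_neg (fun h => hk0 h.1)]
      apply Finset.sum_eq_zero
      intro c _
      rw [if_neg (fun h => hk0 h.1)]
  refine ⟨I, J, hIs, hIb, hJs, hJb, ?_, ?_⟩
  · intro k l
    rw [hF k l]
    split_ifs <;> omega
  unfold density
  have hcard : (Finset.univ.filter fun x : (Fin p × Fin q) × (Fin p × Fin q) =>
      x.1 ≠ x.2 ∧ contraction M I J x.1.1 x.1.2 = 1 ∧ contraction M I J x.2.1 x.2.2 = 1 ∧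
      (x.1.1.val ≤ x.2.1.val + 1 ∧ x.2.1.val ≤ x.1.1.val + 1) ∧
      (x.1.2.val ≤ x.2.2.val + 1 ∧ x.2.2.val ≤ x.1.2.val + 1)).card = 2 * (n - 1) := by
    rw [← Finset.card_range (2 * (n - 1))]
    refine Finset.card_bij' (fun x _ =>
        if x.1.2.val < x.2.2.val then 2 * x.1.2.val else 2 * x.2.2.val + 1)
      (fun m hm => ((⟨0, hp⟩, ⟨m / 2 + m % 2, by
          have := Finset.mem_range.mp hm; omega⟩),
        (⟨0, hp⟩, ⟨m / 2 + 1 - m % 2, by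
          have := Finset.mem_range.mp hm; omega⟩))) ?_ ?_ ?_ ?_
    · intro x hx
      obtain ⟨-, hne, h1x, h2x, -, hdc⟩ := Finset.mem_filter.mp hx
      rw [hF, ite_one_zero_eq_one] at h1x h2x
      rw [Finset.mem_range]
      have hne' : x.1.2.val ≠ x.2.2.val := by
        intro h
        exact hne (Prod.ext (Fin.ext (by omega)) (Fin.ext h))
      split_ifs <;> omega
    · intro m hm
      have hmr := Finset.mem_range.mp hm
      beta_reduce
      refine Finset.mem_filter.mpr ⟨Finset.mem_univ _, ?_, ?_, ?_, ?_, ?_⟩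
      · intro h
        have h2 := congrArg (fun y : Fin p × Fin q => y.2.val) h
        simp only [Fin.val_mk] at h2
        omega
      · rw [hF, ite_one_zero_eq_one]
        exact ⟨rfl, by simp only [Fin.val_mk]; omega⟩
      · rw [hF, ite_one_zero_eq_one]
        exact ⟨rfl, by simp only [Fin.val_mk]; omega⟩
      · simp only [Fin.val_mk]
        omega
      · simp only [Fin.val_mk]
        omega
    · intro x hx
      obtain ⟨-, hne, h1x, h2x, -, hdc⟩ := Finset.mem_filter.mp hx
      rw [hF, ite_one_zero_eq_one] at h1x h2x
      have hne' : x.1.2.val ≠ x.2.2.val := by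
        intro h
        exact hne (Prod.ext (Fin.ext (by omega)) (Fin.ext h))
      beta_reduce
      refine Prod.ext (Prod.ext (Fin.ext ?_) (Fin.ext ?_)) (Prod.ext (Fin.ext ?_) (Fin.ext ?_)) <;>
        simp only [Fin.val_mk] <;> first | omega | (split_ifs <;> omega)
    · intro m hm
      have hmr := Finset.mem_range.mp hm
      dsimp only
      split_ifs <;> omega
  rw [hcard]
  omega
end
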